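/- arXiv:2410.02022 — 3 statements merged into one kernel-verified Lean document; each statement's English description precedes it below -/
import Mathlib

section
/- Uniform measurement outcome probabilities: let D be a prime number, n ≥ 1, U : Matrix (Fin n) (Fin n) ℂ, g ∈ Matrix.unitaryGroup (Fin n) ℂ, ψ : Fin n → ℂ, and c an integer with (c : ZMod D) ≠ 0. If g.mulVec ψ = ψ and U * g = ω^c • (g * U), then for every integer o the expectation of the eigenspace projector equals 1/D times the squared norm: star ψ ⬝ᵥ ((Π o U).mulVec ψ) = (1/D : ℂ) * (star ψ ⬝ᵥ ψ). -/
/-!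
If `g` is unitary and fixes `ψ`, then `⟨ψ, A ψ⟩ = ⟨ψ, A g ψ⟩` and `⟨ψ, g B ψ⟩ = ⟨ψ, B ψ⟩`. A matrix `A`
with `A g = ζ g A` therefore has `⟨ψ, A ψ⟩ = ζ ⟨ψ, A ψ⟩`, i.e. `⟨ψ, A ψ⟩ = 0` unless `ζ = 1`.
The powers `(ω^(-o) U)^j` commute with `g` up to `(ω^c)^j`, and since `D` is prime and `c ≢ 0`, this
factor is `≠ 1` for `0 < j < D`. So only the `j = 0` term of `Π o U` survives in `⟨ψ, Π o U ψ⟩`.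
-/

open Matrix

noncomputable def omg (D : ℕ) : ℂ := Complex.exp (2 * Real.pi * Complex.I / D)

/-- Projector onto the `ω^a`-eigenspace of `U`. -/
noncomputable def Proj (D : ℕ) {n : ℕ} (a : ℤ) (U : Matrix (Fin n) (Fin n) ℂ) :
    Matrix (Fin n) (Fin n) ℂ :=
  (1 / (D : ℂ)) • ∑ j ∈ Finset.range D, ((omg D) ^ (-a) • U) ^ j

theorem isPrimitiveRoot_omg {D : ℕ} (hD : D ≠ 0) : IsPrimitiveRoot (omg D) D := by
  simpa [omg] using Complex.isPrimitiveRoot_exp D hD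

theorem IsPrimitiveRoot.zpow_of_prime {G : Type*} [DivisionCommMonoid G] {ζ : G} {p : ℕ}
    (h : IsPrimitiveRoot ζ p) (hp : p.Prime) {c : ℤ} (hc : (c : ZMod p) ≠ 0) :
    IsPrimitiveRoot (ζ ^ c) p := by
  refine h.zpow_of_gcd_eq_one c (Nat.Coprime.symm ((hp.coprime_iff_not_dvd).2 fun hdvd ↦ hc ?_))
  exact (ZMod.intCast_zmod_eq_zero_iff_dvd c p).2 (Int.natCast_dvd.2 hdvd)

theorem pow_mul_eq_smul_mul_pow {K R : Type*} [CommSemiring K] [Semiring R] [Algebra K R]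
    {a g : R} {ζ : K} (h : a * g = ζ • (g * a)) (j : ℕ) :
    a ^ j * g = ζ ^ j • (g * a ^ j) := by
  induction j with
  | zero => simp
  | succ j ih =>
    rw [pow_succ, mul_assoc, h, mul_smul_comm, ← mul_assoc, ih, smul_mul_assoc, smul_smul,
      mul_assoc, ← pow_succ, ← pow_succ']

section FixedVector

variable {ι 𝕜 : Type*} [Fintype ι] [DecidableEq ι] [CommRing 𝕜] [StarRing 𝕜]
  {g : Matrix ι ι 𝕜} {ψ : ι → 𝕜}

theorem star_vecMul_eq_of_mulVec_eq (hg : g ∈ unitaryGroup ι 𝕜) (hψ : g *ᵥ ψ = ψ) :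
    star ψ ᵥ* g = star ψ := by
  have hgH : gᴴ *ᵥ ψ = ψ := by
    rw [← hψ, mulVec_mulVec, ← star_eq_conjTranspose, Unitary.star_mul_self_of_mem hg,
      one_mulVec, hψ]
  simpa only [conjTranspose_conjTranspose, hgH] using (star_mulVec gᴴ ψ).symm

theorem dotProduct_mulVec_eq_zero_of_mul_eq_smul_mul [IsDomain 𝕜] (hg : g ∈ unitaryGroup ι 𝕜)
    (hψ : g *ᵥ ψ = ψ) {A : Matrix ι ι 𝕜} {ζ : 𝕜} (hA : A * g = ζ • (g * A)) (hζ : ζ ≠ 1) :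
    star ψ ⬝ᵥ A *ᵥ ψ = 0 := by
  have h : star ψ ⬝ᵥ A *ᵥ ψ = ζ * (star ψ ⬝ᵥ A *ᵥ ψ) :=
    calc star ψ ⬝ᵥ A *ᵥ ψ = star ψ ⬝ᵥ (A * g) *ᵥ ψ := by rw [← mulVec_mulVec, hψ]
      _ = ζ * (star ψ ⬝ᵥ g *ᵥ A *ᵥ ψ) := by
        rw [hA, smul_mulVec, dotProduct_smul, smul_eq_mul, mulVec_mulVec]
      _ = ζ * (star ψ ⬝ᵥ A *ᵥ ψ) := by
        rw [dotProduct_mulVec, star_vecMul_eq_of_mulVec_eq hg hψ]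
  have h' : (1 - ζ) * (star ψ ⬝ᵥ A *ᵥ ψ) = 0 := by linear_combination h
  exact (mul_eq_zero.1 h').resolve_left (sub_ne_zero.2 hζ.symm)

end FixedVector

theorem dotProduct_Proj_mulVec (D : ℕ) {n : ℕ} (a : ℤ) (U : Matrix (Fin n) (Fin n) ℂ)
    (ψ : Fin n → ℂ) :
    star ψ ⬝ᵥ (Proj D a U) *ᵥ ψ =
      1 / (D : ℂ) * ∑ j ∈ Finset.range D, star ψ ⬝ᵥ ((omg D ^ (-a) • U) ^ j) *ᵥ ψ := by
  rw [Proj, smul_mulVec, dotProduct_smul, smul_eq_mul, sum_mulVec, dotProduct_sum]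

theorem uniform_outcome_probabilities_general (D : ℕ) (hD : Nat.Prime D) (n : ℕ)
    (U : Matrix (Fin n) (Fin n) ℂ)
    (g : Matrix (Fin n) (Fin n) ℂ) (hg : g ∈ Matrix.unitaryGroup (Fin n) ℂ)
    (ψ : Fin n → ℂ) (c : ℤ) (hc : ((c : ℤ) : ZMod D) ≠ 0)
    (hstab : g.mulVec ψ = ψ) (hcomm : U * g = (omg D) ^ c • (g * U)) (o : ℤ) :
    star ψ ⬝ᵥ (Proj D o U).mulVec ψ = (1 / (D : ℂ)) * (star ψ ⬝ᵥ ψ) := by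
  have hprim : IsPrimitiveRoot (omg D ^ c) D :=
    (isPrimitiveRoot_omg hD.ne_zero).zpow_of_prime hD hc
  have hcomm' : (omg D ^ (-o) • U) * g = omg D ^ c • (g * (omg D ^ (-o) • U)) := by
    rw [smul_mul_assoc, hcomm, mul_smul_comm, smul_comm]
  rw [dotProduct_Proj_mulVec, Finset.sum_eq_single_of_mem 0 (Finset.mem_range.2 hD.pos)]
  · simp
  · intro j hj hj0
    exact dotProduct_mulVec_eq_zero_of_mul_eq_smul_mul hg hstab (pow_mul_eq_smul_mul_pow hcomm' j)
      (hprim.pow_ne_one_of_pos_of_lt hj0 (Finset.mem_range.1 hj))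

/-- Uniform measurement outcome probabilities. -/
theorem uniform_outcome_probabilities (D : ℕ) (hD : Nat.Prime D) (n : ℕ) (hn : 1 ≤ n)
    (U : Matrix (Fin n) (Fin n) ℂ)
    (g : Matrix (Fin n) (Fin n) ℂ) (hg : g ∈ Matrix.unitaryGroup (Fin n) ℂ)
    (ψ : Fin n → ℂ) (c : ℤ) (hc : ((c : ℤ) : ZMod D) ≠ 0)
    (hstab : g.mulVec ψ = ψ) (hcomm : U * g = (omg D) ^ c • (g * U)) (o : ℤ) :
    star ψ ⬝ᵥ (Proj D o U).mulVec ψ = (1 / (D : ℂ)) * (star ψ ⬝ᵥ ψ) :=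
  uniform_outcome_probabilities_general D hD n U g hg ψ c hc hstab hcomm o
end

section
/- Plaquette product identity: suppose the commutation-function conditions c(p_g,p_b) + c(q_g,q_b) ≡ 0, c(p_r,p_g) + c(q_r,q_g) ≡ 0, and c(p_b,p_r) + c(q_b,q_r) ≡ 0 all hold modulo D, and suppose the check-product condition (p_g * p_r * p_b) ⊗ₖ (q_g * q_r * q_b) = 1 holds. Then the product of the three plaquette edge operators equals the identity: ((p_r * p_b) ⊗ₖ (q_r * q_b)) * ((p_b * p_g) ⊗ₖ (q_b * q_g)) * ((p_g * p_r) ⊗ₖ (q_g * q_r)) = 1. -/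
noncomputable def Xmat (D : ℕ) : Matrix (Fin D) (Fin D) ℂ :=
  Matrix.of fun i j => if (i : ZMod D) = (j : ZMod D) + 1 then 1 else 0

noncomputable def Zmat (D : ℕ) : Matrix (Fin D) (Fin D) ℂ :=
  Matrix.of fun i j => if i = j then (omg D) ^ (i : ℕ) else 0

open Kronecker

/-! ### Auxiliary lemmas -/

lemma omg_ne_zero (D : ℕ) : omg D ≠ 0 := Complex.exp_ne_zero _

lemma omg_pow_D (D : ℕ) (hD : 0 < D) : omg D ^ D = 1 := by
  rw [omg, ← Complex.exp_nat_mul]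
  have hD0 : (D:ℂ) ≠ 0 := Nat.cast_ne_zero.mpr hD.ne'
  have : (D:ℂ) * (2 * Real.pi * Complex.I / D) = 2 * Real.pi * Complex.I := by
    field_simp
  rw [this, Complex.exp_two_pi_mul_I]

lemma omg_pow_mod (D : ℕ) (hD : 0 < D) (m : ℕ) : omg D ^ m = omg D ^ (m % D) := by
  conv_lhs => rw [← Nat.div_add_mod m D]
  rw [pow_add, pow_mul, omg_pow_D D hD, one_pow, one_mul]

lemma omg_pow_congr (D : ℕ) (hD : 0 < D) (m n : ℕ) (h : (m : ZMod D) = n) :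
    omg D ^ m = omg D ^ n := by
  rw [omg_pow_mod D hD m, omg_pow_mod D hD n]
  congr 1
  rwa [ZMod.natCast_eq_natCast_iff, Nat.ModEq] at h

def zEquiv (D : ℕ) [NeZero D] : Fin D ≃ ZMod D where
  toFun i := (i : ℕ)
  invFun z := ⟨z.val, z.val_lt⟩
  left_inv i := Fin.ext (ZMod.val_cast_of_lt i.isLt)
  right_inv z := ZMod.natCast_rightInverse z

lemma fin_cast_inj (D : ℕ) [NeZero D] (i j : Fin D) :
    ((i : ℕ) : ZMod D) = ((j : ℕ) : ZMod D) ↔ i = j := by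
  constructor
  · intro h
    have := (ZMod.natCast_eq_natCast_iff _ _ _).mp h
    exact Fin.ext (by rwa [Nat.ModEq, Nat.mod_eq_of_lt i.isLt, Nat.mod_eq_of_lt j.isLt] at this)
  · rintro rfl; rfl

lemma Zmat_eq (D : ℕ) : Zmat D = Matrix.diagonal (fun i : Fin D => omg D ^ (i : ℕ)) := by
  ext i j
  simp [Zmat, Matrix.diagonal_apply]

lemma Xpow (D : ℕ) [NeZero D] (n : ℕ) :
    Xmat D ^ n = Matrix.of fun (i j : Fin D) =>
      if (i : ZMod D) = (j : ZMod D) + n then 1 else 0 := by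
  induction n with
  | zero =>
    ext i j
    simp [pow_zero, Matrix.one_apply, fin_cast_inj]
  | succ n ih =>
    rw [pow_succ, ih]
    ext i j
    rw [Matrix.mul_apply]
    set c : Fin D := (zEquiv D).symm ((j : ZMod D) + 1) with hc
    have hcv : ((c : ℕ) : ZMod D) = (j : ZMod D) + 1 := (zEquiv D).apply_symm_apply _
    have hsum : ∀ k : Fin D,
        (Matrix.of fun (i j : Fin D) =>
          if (i : ZMod D) = (j : ZMod D) + (n : ZMod D) then (1:ℂ) else 0) i k * Xmat D k j
        = if k = c then (if (i : ZMod D) = (c : ZMod D) + n then (1:ℂ) else 0) else 0 := by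
      intro k
      simp only [Matrix.of_apply, Xmat]
      by_cases hk : k = c
      · subst hk; simp [hcv]
      · have hk2 : ¬((k : ℕ) : ZMod D) = ((j : ℕ) : ZMod D) + 1 := fun h =>
          hk (by rw [hc, Equiv.eq_symm_apply]; exact h)
        simp [hk, hk2]
    rw [Finset.sum_congr rfl fun k _ => hsum k, Finset.sum_ite_eq' Finset.univ c]
    simp only [Finset.mem_univ, if_true, Matrix.of_apply, hcv]
    congr 2
    push_cast
    ring

lemma zpow_reduce {D : ℕ} (hD : 0 < D) (M : Matrix (Fin D) (Fin D) ℂ)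
    (hM : M ^ D = 1) (hu : IsUnit M.det) (n : ℤ) :
    M ^ n = M ^ (n % (D : ℤ)).toNat := by
  have h0 : (0:ℤ) ≤ n % D := Int.emod_nonneg n (by exact_mod_cast hD.ne')
  conv_lhs => rw [← Int.mul_ediv_add_emod n D]
  rw [Matrix.zpow_add hu, Matrix.zpow_mul M hu, zpow_natCast, hM, Matrix.one_zpow, one_mul,
    ← Int.toNat_of_nonneg h0, zpow_natCast, Int.toNat_natCast]

lemma XmatD (D : ℕ) [NeZero D] : Xmat D ^ D = 1 := by
  rw [Xpow]
  ext i j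
  simp [Matrix.one_apply, ZMod.natCast_self, fin_cast_inj]

lemma ZmatD (D : ℕ) (hD : 0 < D) : Zmat D ^ D = 1 := by
  rw [Zmat_eq, Matrix.diagonal_pow]
  have : ((fun i : Fin D => omg D ^ (i:ℕ)) ^ D) = fun _ : Fin D => (1:ℂ) := by
    funext i
    rw [Pi.pow_apply, ← pow_mul, mul_comm, pow_mul, omg_pow_D D hD, one_pow]
  rw [this, Matrix.diagonal_one]

lemma Xmat_det_unit (D : ℕ) (hD : 0 < D) [NeZero D] : IsUnit (Xmat D).det := by
  have h : IsUnit ((Xmat D).det ^ D) := by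
    rw [← Matrix.det_pow, XmatD]; simp
  exact (isUnit_pow_iff hD.ne').mp h

lemma Zmat_det_unit (D : ℕ) (hD : 0 < D) : IsUnit (Zmat D).det := by
  have h : IsUnit ((Zmat D).det ^ D) := by
    rw [← Matrix.det_pow, ZmatD D hD]; simp
  exact (isUnit_pow_iff hD.ne').mp h

lemma ZX (D : ℕ) [NeZero D] (hD : 0 < D) :
    Zmat D * Xmat D = omg D • (Xmat D * Zmat D) := by
  rw [Zmat_eq]
  ext i j
  rw [Matrix.smul_apply, Matrix.diagonal_mul, Matrix.mul_diagonal]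
  simp only [Xmat, Matrix.of_apply, smul_eq_mul]
  by_cases h : ((i : ℕ) : ZMod D) = ((j : ℕ) : ZMod D) + 1
  · have hcongr : ((i : ℕ) : ZMod D) = (((j : ℕ) + 1 : ℕ) : ZMod D) := by push_cast; exact h
    rw [if_pos h, omg_pow_congr D hD _ _ hcongr, pow_succ]
    ring
  · rw [if_neg h]; ring

lemma ZpowX (D : ℕ) [NeZero D] (hD : 0 < D) (b : ℕ) :
    Zmat D ^ b * Xmat D = omg D ^ b • (Xmat D * Zmat D ^ b) := by
  induction b with
  | zero => simp
  | succ b ih =>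
    rw [pow_succ, mul_assoc, ZX D hD, mul_smul_comm, ← mul_assoc, ih, smul_mul_assoc,
      smul_smul, mul_assoc, ← pow_succ', ← pow_succ]

lemma ZpowXpow (D : ℕ) [NeZero D] (hD : 0 < D) (a b : ℕ) :
    Zmat D ^ b * Xmat D ^ a = omg D ^ (a * b) • (Xmat D ^ a * Zmat D ^ b) := by
  induction a with
  | zero => simp
  | succ a ih =>
    rw [pow_succ, ← mul_assoc, ih, smul_mul_assoc, mul_assoc, ZpowX D hD, mul_smul_comm,
      smul_smul, ← pow_add, ← mul_assoc, ← pow_succ]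
    congr 2
    ring

lemma mono_mul (D : ℕ) [NeZero D] (hD : 0 < D) (a b c d : ℕ) :
    (Xmat D ^ a * Zmat D ^ b) * (Xmat D ^ c * Zmat D ^ d)
      = omg D ^ (c * b) • (Xmat D ^ (a + c) * Zmat D ^ (b + d)) := by
  rw [mul_assoc, ← mul_assoc (Zmat D ^ b), ZpowXpow D hD, smul_mul_assoc, mul_smul_comm]
  congr 1
  simp [pow_add, mul_assoc]

lemma pm_mul (D : ℕ) [NeZero D] (hD : 0 < D) (s t a b c d : ℕ) :
    (omg D ^ s • (Xmat D ^ a * Zmat D ^ b)) * (omg D ^ t • (Xmat D ^ c * Zmat D ^ d))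
      = omg D ^ (s + t + c * b) • (Xmat D ^ (a + c) * Zmat D ^ (b + d)) := by
  rw [smul_mul_assoc, mul_smul_comm, mono_mul D hD, smul_smul, smul_smul,
    ← pow_add, ← pow_add]

lemma pm_mul' (D : ℕ) [NeZero D] (hD : 0 < D) (s a b c d : ℕ) :
    (omg D ^ s • (Xmat D ^ a * Zmat D ^ b)) * (Xmat D ^ c * Zmat D ^ d)
      = omg D ^ (s + c * b) • (Xmat D ^ (a + c) * Zmat D ^ (b + d)) := by
  rw [smul_mul_assoc, mono_mul D hD, smul_smul, ← pow_add]

lemma kron_smul_smul {D : ℕ} (c d : ℂ) (A B : Matrix (Fin D) (Fin D) ℂ) :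
    (c • A) ⊗ₖ (d • B) = (c * d) • (A ⊗ₖ B) := by
  rw [Matrix.smul_kronecker, Matrix.kronecker_smul, smul_smul]

lemma square_one {n : Type*} [Fintype n] [DecidableEq n] (c : ℂ) (M : Matrix n n ℂ)
    (h : c • M = 1) : (c * c) • (M * M) = 1 := by
  have : (c * c) • (M * M) = (c • M) * (c • M) := by
    rw [smul_mul_assoc, mul_smul_comm, smul_smul]
  rw [this, h, one_mul]

lemma close_lemma (D : ℕ) (hD : 0 < D) (S W Ap Bp Aq Bq Ap' Bp' Aq' Bq' : ℕ)
    (hS : (S : ZMod D) = W) (hA : Ap = Ap') (hB : Bp = Bp') (hA2 : Aq = Aq') (hB2 : Bq = Bq')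
    (hK : omg D ^ W • ((Xmat D ^ Ap' * Zmat D ^ Bp') ⊗ₖ (Xmat D ^ Aq' * Zmat D ^ Bq')) = 1) :
    omg D ^ S • ((Xmat D ^ Ap * Zmat D ^ Bp) ⊗ₖ (Xmat D ^ Aq * Zmat D ^ Bq)) = 1 := by
  rw [omg_pow_congr D hD S W hS, hA, hB, hA2, hB2]
  exact hK

/-- Plaquette product identity: the product of the three plaquette edge
operators equals the identity. -/
theorem plaquette_product_identity (D : ℕ) (hD : 2 ≤ D)
    (ag bg ar br ab bb αg βg αr βr αb βb : ℤ)
    (pg : Matrix (Fin D) (Fin D) ℂ) (hpg : pg = Xmat D ^ ag * Zmat D ^ bg)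
    (pr : Matrix (Fin D) (Fin D) ℂ) (hpr : pr = Xmat D ^ ar * Zmat D ^ br)
    (pb : Matrix (Fin D) (Fin D) ℂ) (hpb : pb = Xmat D ^ ab * Zmat D ^ bb)
    (qg : Matrix (Fin D) (Fin D) ℂ) (hqg : qg = Xmat D ^ αg * Zmat D ^ βg)
    (qr : Matrix (Fin D) (Fin D) ℂ) (hqr : qr = Xmat D ^ αr * Zmat D ^ βr)
    (qb : Matrix (Fin D) (Fin D) ℂ) (hqb : qb = Xmat D ^ αb * Zmat D ^ βb)
    (h1 : (((-(ag * bb) + ab * bg) + (-(αg * βb) + αb * βg) : ℤ) : ZMod D) = 0)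
    (h2 : (((-(ar * bg) + ag * br) + (-(αr * βg) + αg * βr) : ℤ) : ZMod D) = 0)
    (h3 : (((-(ab * br) + ar * bb) + (-(αb * βr) + αr * βb) : ℤ) : ZMod D) = 0)
    (hprod : (pg * pr * pb) ⊗ₖ (qg * qr * qb) = 1) :
    ((pr * pb) ⊗ₖ (qr * qb)) * ((pb * pg) ⊗ₖ (qb * qg)) * ((pg * pr) ⊗ₖ (qg * qr)) = 1 := by
  have hD0 : 0 < D := by omega
  haveI : NeZero D := ⟨hD0.ne'⟩
  have hXu := Xmat_det_unit D hD0
  have hZu := Zmat_det_unit D hD0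
  have hXD := XmatD D
  have hZD := ZmatD D hD0
  have hred : ∀ (x y : ℤ), Xmat D ^ x * Zmat D ^ y
      = Xmat D ^ (x % (D:ℤ)).toNat * Zmat D ^ (y % (D:ℤ)).toNat := fun x y => by
    rw [zpow_reduce hD0 _ hXD hXu, zpow_reduce hD0 _ hZD hZu]
  rw [hred] at hpg hpr hpb hqg hqr hqb
  have hcast : ∀ a : ℤ, (((a % (D:ℤ)).toNat : ℕ) : ZMod D) = (a : ZMod D) := by
    intro a
    have h0 : (0:ℤ) ≤ a % (D:ℤ) :=
      Int.emod_nonneg a (by exact_mod_cast hD0.ne')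
    calc (((a % (D:ℤ)).toNat : ℕ) : ZMod D)
        = ((((a % (D:ℤ)).toNat : ℕ) : ℤ) : ZMod D) := by rw [Int.cast_natCast]
      _ = ((a % (D:ℤ) : ℤ) : ZMod D) := by rw [Int.toNat_of_nonneg h0]
      _ = (a : ZMod D) := ZMod.intCast_mod a D
  -- rewrite hprod into normal form
  rw [hpg, hpr, hpb, hqg, hqr, hqb] at hprod
  simp only [mono_mul D hD0, pm_mul' D hD0] at hprod
  rw [kron_smul_smul, ← pow_add] at hprod
  have hK0 := square_one _ _ hprod
  rw [← pow_add, ← Matrix.mul_kronecker_mul] at hK0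
  simp only [mono_mul D hD0] at hK0
  rw [kron_smul_smul, smul_smul, ← pow_add, ← pow_add] at hK0
  -- rewrite the goal into normal form
  rw [hpg, hpr, hpb, hqg, hqr, hqb, ← Matrix.mul_kronecker_mul, ← Matrix.mul_kronecker_mul]
  simp only [mono_mul D hD0, pm_mul D hD0, pm_mul' D hD0]
  rw [kron_smul_smul, ← pow_add]
  apply close_lemma D hD0 _ _ _ _ _ _ _ _ _ _ ?_ ?_ ?_ ?_ ?_ hK0
  · push_cast [hcast]
    push_cast at h1 h2 h3
    linear_combination h2 + h3 - 3 * h1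
  · omega
  · omega
  · omega
  · omega
end

section
/- Checks commute with plaquette operators: suppose the commutation-function condition c(p_r,p_g) + c(q_r,q_g) ≡ 0 holds modulo D. Then the two-qudit check operator p_r ⊗ₖ q_r commutes with the plaquette edge operator (p_r * p_g) ⊗ₖ (q_r * q_g): (p_r ⊗ₖ q_r) * ((p_r * p_g) ⊗ₖ (q_r * q_g)) = ((p_r * p_g) ⊗ₖ (q_r * q_g)) * (p_r ⊗ₖ q_r). -/
namespace CheckPlaqAux

lemma omg_ne_zero (D : ℕ) : omg D ≠ 0 := Complex.exp_ne_zero _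

lemma omg_pow_D (D : ℕ) (hD : D ≠ 0) : omg D ^ D = 1 := by
  rw [omg, ← Complex.exp_nat_mul]
  have : (D : ℂ) ≠ 0 := Nat.cast_ne_zero.mpr hD
  rw [show (D : ℂ) * (2 * Real.pi * Complex.I / D) = 2 * Real.pi * Complex.I by
    field_simp]
  exact Complex.exp_two_pi_mul_I

lemma omg_pow_mod (D : ℕ) (hD : D ≠ 0) (a : ℕ) : omg D ^ a = omg D ^ (a % D) := by
  conv_lhs => rw [← Nat.div_add_mod a D]
  rw [pow_add, pow_mul, omg_pow_D D hD, one_pow, one_mul]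

lemma omg_pow_congr (D : ℕ) (hD : D ≠ 0) {a b : ℕ} (h : a ≡ b [MOD D]) :
    omg D ^ a = omg D ^ b := by
  rw [omg_pow_mod D hD a, omg_pow_mod D hD b, h]

lemma omg_zpow_eq_one (D : ℕ) (hD : D ≠ 0) {n : ℤ} (h : (n : ZMod D) = 0) :
    omg D ^ n = 1 := by
  obtain ⟨k, rfl⟩ := (ZMod.intCast_zmod_eq_zero_iff_dvd n D).mp h
  rw [zpow_mul, zpow_natCast, omg_pow_D D hD, one_zpow]

lemma ZX (D : ℕ) (hD : D ≠ 0) : Zmat D * Xmat D = omg D • (Xmat D * Zmat D) := by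
  ext i j
  simp only [Matrix.mul_apply, Zmat, Xmat, Matrix.of_apply, Matrix.smul_apply, smul_eq_mul,
    ite_mul, zero_mul, mul_ite, mul_zero, mul_one]
  rw [Finset.sum_eq_single_of_mem i (Finset.mem_univ i) (by intro b _ hb; simp [Ne.symm hb]),
    Finset.sum_eq_single_of_mem j (Finset.mem_univ j) (by intro b _ hb; simp [hb]),
    if_pos rfl, if_pos rfl]
  by_cases hc : (i : ZMod D) = (j : ZMod D) + 1
  · rw [if_pos hc, if_pos hc]
    have hmod : (i : ℕ) ≡ (j : ℕ) + 1 [MOD D] := by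
      rw [← ZMod.natCast_eq_natCast_iff]
      push_cast
      exact hc
    rw [omg_pow_congr D hD hmod, pow_succ, mul_comm, one_mul]
  · rw [if_neg hc, if_neg hc, mul_zero]

end CheckPlaqAux

namespace CheckPlaqAux

lemma fin_cast_inj (D : ℕ) [NeZero D] {i j : Fin D} (h : (i : ZMod D) = (j : ZMod D)) :
    i = j := by
  have := congrArg ZMod.val h
  rwa [ZMod.val_natCast_of_lt i.isLt, ZMod.val_natCast_of_lt j.isLt, ← Fin.ext_iff] at this

def finOf (D : ℕ) [NeZero D] (a : ZMod D) : Fin D := ⟨a.val, a.val_lt⟩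

lemma finOf_cast (D : ℕ) [NeZero D] (a : ZMod D) : ((finOf D a : Fin D) : ZMod D) = a :=
  ZMod.natCast_rightInverse a

lemma X_cond_iff (D : ℕ) [NeZero D] (i k : Fin D) :
    ((i : ZMod D) = (k : ZMod D) + 1) ↔ k = finOf D ((i : ZMod D) - 1) := by
  constructor
  · intro h
    apply fin_cast_inj D
    rw [finOf_cast, h]; ring
  · rintro rfl
    rw [finOf_cast]; ring

noncomputable def Xinv (D : ℕ) : Matrix (Fin D) (Fin D) ℂ :=
  Matrix.of fun i j => if (j : ZMod D) = (i : ZMod D) + 1 then 1 else 0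

lemma X_mul_Xinv (D : ℕ) [NeZero D] : Xmat D * Xinv D = 1 := by
  ext i j
  rw [Matrix.mul_apply]
  rw [Finset.sum_eq_single_of_mem (finOf D ((i : ZMod D) - 1)) (Finset.mem_univ _)
    (by
      intro k _ hk
      have : ¬ ((i : ZMod D) = (k : ZMod D) + 1) := fun hc => hk ((X_cond_iff D i k).mp hc)
      simp [Xmat, this])]
  have h1 : Xmat D i (finOf D ((i : ZMod D) - 1)) = 1 := by
    have hc := (X_cond_iff D i (finOf D ((i : ZMod D) - 1))).mpr rfl
    simp only [Xmat, Matrix.of_apply, if_pos hc]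
  have h2 : Xinv D (finOf D ((i : ZMod D) - 1)) j = if i = j then 1 else 0 := by
    simp only [Xinv, Matrix.of_apply, finOf_cast, sub_add_cancel]
    by_cases hij : i = j
    · simp [hij]
    · have : ¬ ((j : ZMod D) = (i : ZMod D)) := fun hc => hij (fin_cast_inj D hc).symm
      simp [this, hij]
  rw [h1, h2, one_mul, Matrix.one_apply]

lemma Xinv_mul_X (D : ℕ) [NeZero D] : Xinv D * Xmat D = 1 := by
  ext i j
  rw [Matrix.mul_apply]
  rw [Finset.sum_eq_single_of_mem (finOf D ((i : ZMod D) + 1)) (Finset.mem_univ _)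
    (by
      intro k _ hk
      have : ¬ ((k : ZMod D) = (i : ZMod D) + 1) := by
        intro hc
        exact hk (fin_cast_inj D (by rw [hc, finOf_cast]))
      simp [Xinv, this])]
  have h1 : Xinv D i (finOf D ((i : ZMod D) + 1)) = 1 := by
    simp [Xinv, finOf_cast]
  have h2 : Xmat D (finOf D ((i : ZMod D) + 1)) j = if i = j then 1 else 0 := by
    simp only [Xmat, Matrix.of_apply, finOf_cast]
    by_cases hij : i = j
    · simp [hij]
    · have : ¬ ((i : ZMod D) + 1 = (j : ZMod D) + 1) := by
        intro hc
        exact hij (fin_cast_inj D (by linear_combination hc))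
      simp [this, hij]
  rw [h1, h2, one_mul, Matrix.one_apply]

noncomputable def Zinv (D : ℕ) : Matrix (Fin D) (Fin D) ℂ :=
  Matrix.of fun i j => if i = j then ((omg D) ^ (i : ℕ))⁻¹ else 0

lemma Zmat_diag (D : ℕ) : Zmat D = Matrix.diagonal fun i : Fin D => (omg D) ^ (i : ℕ) := by
  ext i j
  by_cases hij : i = j <;> simp [Zmat, Matrix.diagonal_apply, hij]

lemma Zinv_diag (D : ℕ) : Zinv D = Matrix.diagonal fun i : Fin D => ((omg D) ^ (i : ℕ))⁻¹ := by
  ext i j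
  by_cases hij : i = j <;> simp [Zinv, Matrix.diagonal_apply, hij]

lemma Z_mul_Zinv (D : ℕ) : Zmat D * Zinv D = 1 := by
  rw [Zmat_diag, Zinv_diag, Matrix.diagonal_mul_diagonal]
  convert Matrix.diagonal_one
  exact mul_inv_cancel₀ (pow_ne_zero _ (omg_ne_zero D))

lemma Zinv_mul_Z (D : ℕ) : Zinv D * Zmat D = 1 := by
  rw [Zmat_diag, Zinv_diag, Matrix.diagonal_mul_diagonal]
  convert Matrix.diagonal_one
  exact inv_mul_cancel₀ (pow_ne_zero _ (omg_ne_zero D))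

noncomputable def Xu (D : ℕ) [NeZero D] : (Matrix (Fin D) (Fin D) ℂ)ˣ :=
  ⟨Xmat D, Xinv D, X_mul_Xinv D, Xinv_mul_X D⟩

noncomputable def Zu (D : ℕ) : (Matrix (Fin D) (Fin D) ℂ)ˣ :=
  ⟨Zmat D, Zinv D, Z_mul_Zinv D, Zinv_mul_Z D⟩

noncomputable def Wu (D : ℕ) : (Matrix (Fin D) (Fin D) ℂ)ˣ :=
  Units.map (algebraMap ℂ (Matrix (Fin D) (Fin D) ℂ)).toMonoidHom
    (Units.mk0 (omg D) (omg_ne_zero D))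

@[simp] lemma Xu_val (D : ℕ) [NeZero D] : ((Xu D : _ˣ) : Matrix (Fin D) (Fin D) ℂ) = Xmat D := rfl
@[simp] lemma Zu_val (D : ℕ) : ((Zu D : _ˣ) : Matrix (Fin D) (Fin D) ℂ) = Zmat D := rfl

lemma Wu_val_zpow (D : ℕ) (k : ℤ) :
    ((Wu D ^ k : _ˣ) : Matrix (Fin D) (Fin D) ℂ) = omg D ^ k • (1 : Matrix (Fin D) (Fin D) ℂ) := by
  rw [Wu, ← map_zpow, Units.coe_map]
  simp only [MonoidHom.coe_coe, RingHom.toMonoidHom_eq_coe, Units.val_zpow_eq_zpow_val,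
    Units.val_mk0, Algebra.algebraMap_eq_smul_one]

lemma Wu_val (D : ℕ) :
    ((Wu D : _ˣ) : Matrix (Fin D) (Fin D) ℂ) = omg D • (1 : Matrix (Fin D) (Fin D) ℂ) := by
  simpa using Wu_val_zpow D 1

lemma Wu_comm (D : ℕ) (u : (Matrix (Fin D) (Fin D) ℂ)ˣ) : Commute (Wu D) u := by
  apply Units.ext
  show ((Wu D : _ˣ) : Matrix (Fin D) (Fin D) ℂ) * u = u * ((Wu D : _ˣ) : Matrix (Fin D) (Fin D) ℂ)
  rw [Wu_val, smul_mul_assoc, mul_smul_comm, one_mul, mul_one]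

lemma ZXu (D : ℕ) [NeZero D] : Zu D * Xu D = Wu D * (Xu D * Zu D) := by
  apply Units.ext
  show Zmat D * Xmat D = ((Wu D : _ˣ) : Matrix (Fin D) (Fin D) ℂ) * (Xmat D * Zmat D)
  rw [Wu_val, smul_mul_assoc, one_mul, ZX D (NeZero.ne D)]

lemma heisenberg {G : Type*} [Group G] (w z x : G) (hw : ∀ g : G, Commute w g)
    (hzx : z * x = w * (x * z)) (m n : ℤ) :
    z ^ m * x ^ n = w ^ (m * n) * (x ^ n * z ^ m) := by
  have h1 : SemiconjBy x z (w⁻¹ * z) := by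
    show x * z = (w⁻¹ * z) * x
    rw [mul_assoc, hzx, ← mul_assoc, inv_mul_cancel, one_mul]
  have h2 : x * z ^ m = (w ^ (-m) * z ^ m) * x := by
    have h := h1.zpow_right m
    rwa [(hw z).inv_left.mul_zpow m, inv_zpow'] at h
  have h3 : SemiconjBy (z ^ m) x (w ^ m * x) := by
    show z ^ m * x = (w ^ m * x) * z ^ m
    rw [mul_assoc, h2]
    group
  have h4 := h3.zpow_right n
  rw [((hw x).zpow_left m).mul_zpow n, ← zpow_mul] at h4
  rw [h4]
  group

lemma prod_form {G : Type*} [Group G] (w z x : G) (hw : ∀ g : G, Commute w g)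
    (hzx : z * x = w * (x * z)) (a b a' b' : ℤ) :
    (x ^ a' * z ^ b') * (x ^ a * z ^ b) = w ^ (a * b') * (x ^ (a' + a) * z ^ (b' + b)) := by
  have hh := heisenberg w z x hw hzx b' a
  have hwc : ∀ (k : ℤ) (g : G), w ^ k * g = g * w ^ k := fun k g => ((hw g).zpow_left k).eq
  calc (x ^ a' * z ^ b') * (x ^ a * z ^ b)
      = x ^ a' * (z ^ b' * x ^ a) * z ^ b := by group
    _ = x ^ a' * (w ^ (b' * a) * (x ^ a * z ^ b')) * z ^ b := by rw [hh]
    _ = w ^ (b' * a) * (x ^ a' * x ^ a * (z ^ b' * z ^ b)) := by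
        rw [← mul_assoc (x ^ a'), ← hwc (b' * a) (x ^ a')]
        group
    _ = w ^ (a * b') * (x ^ (a' + a) * z ^ (b' + b)) := by
        rw [mul_comm b' a, ← zpow_add, ← zpow_add]

lemma comm_swap {G : Type*} [Group G] (w z x : G) (hw : ∀ g : G, Commute w g)
    (hzx : z * x = w * (x * z)) (a b a' b' : ℤ) :
    (x ^ a' * z ^ b') * (x ^ a * z ^ b)
      = w ^ (a * b' - a' * b) * ((x ^ a * z ^ b) * (x ^ a' * z ^ b')) := by
  rw [prod_form w z x hw hzx a b a' b', prod_form w z x hw hzx a' b' a b,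
    add_comm a a', add_comm b b']
  have hexp : a * b' - a' * b + a' * b = a * b' := by ring
  conv_rhs => rw [← mul_assoc, ← zpow_add, hexp]

lemma comm_phase (D : ℕ) (hD : D ≠ 0) (a b a' b' : ℤ) :
    (Xmat D ^ a' * Zmat D ^ b') * (Xmat D ^ a * Zmat D ^ b) =
      omg D ^ (a * b' - a' * b) • ((Xmat D ^ a * Zmat D ^ b) * (Xmat D ^ a' * Zmat D ^ b')) := by
  haveI : NeZero D := ⟨hD⟩
  have hu := comm_swap (Wu D) (Zu D) (Xu D) (Wu_comm D) (ZXu D) a b a' b'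
  have hv := congrArg Units.val hu
  simp only [Units.val_mul] at hv
  rw [Wu_val_zpow D] at hv
  simp only [Matrix.coe_units_zpow, Xu_val, Zu_val] at hv
  rw [hv, smul_mul_assoc, one_mul]

end CheckPlaqAux


open Kronecker

/-- Checks commute with plaquette operators. -/
theorem check_commutes_with_plaquette (D : ℕ) (hD : 2 ≤ D)
    (ag bg ar br αg βg αr βr : ℤ)
    (pg : Matrix (Fin D) (Fin D) ℂ) (hpg : pg = Xmat D ^ ag * Zmat D ^ bg)
    (pr : Matrix (Fin D) (Fin D) ℂ) (hpr : pr = Xmat D ^ ar * Zmat D ^ br)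
    (qg : Matrix (Fin D) (Fin D) ℂ) (hqg : qg = Xmat D ^ αg * Zmat D ^ βg)
    (qr : Matrix (Fin D) (Fin D) ℂ) (hqr : qr = Xmat D ^ αr * Zmat D ^ βr)
    (h : (((-(ar * bg) + ag * br) + (-(αr * βg) + αg * βr) : ℤ) : ZMod D) = 0) :
    (pr ⊗ₖ qr) * ((pr * pg) ⊗ₖ (qr * qg)) = ((pr * pg) ⊗ₖ (qr * qg)) * (pr ⊗ₖ qr) := by
  have hD0 : D ≠ 0 := by omega
  have hgr : pg * pr = omg D ^ (ar * bg - ag * br) • (pr * pg) := by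
    rw [hpg, hpr]; exact CheckPlaqAux.comm_phase D hD0 ar br ag bg
  have hgr' : qg * qr = omg D ^ (αr * βg - αg * βr) • (qr * qg) := by
    rw [hqg, hqr]; exact CheckPlaqAux.comm_phase D hD0 αr βr αg βg
  have hone : omg D ^ (ar * bg - ag * br) * omg D ^ (αr * βg - αg * βr) = 1 := by
    rw [← zpow_add₀ (CheckPlaqAux.omg_ne_zero D)]
    apply CheckPlaqAux.omg_zpow_eq_one D hD0
    have : ((ar * bg - ag * br + (αr * βg - αg * βr) : ℤ) : ZMod D)
        = -(((-(ar * bg) + ag * br) + (-(αr * βg) + αg * βr) : ℤ) : ZMod D) := by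
      push_cast; ring
    rw [this, h, neg_zero]
  have hK : (pg ⊗ₖ qg) * (pr ⊗ₖ qr) = (pr ⊗ₖ qr) * (pg ⊗ₖ qg) := by
    rw [← Matrix.mul_kronecker_mul, ← Matrix.mul_kronecker_mul, hgr, hgr',
      Matrix.smul_kronecker, Matrix.kronecker_smul, smul_smul, hone, one_smul]
  rw [Matrix.mul_kronecker_mul, mul_assoc, hK]
end
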